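/- arXiv:2510.26066 — 4 statements merged into one kernel-verified Lean document; each statement's English description precedes it below -/
import Mathlib

section
/- For probability measures μ and ν on a Polish space X, the KL divergence satisfies the duality formula: KL(μ‖ν) equals the supremum over bounded continuous functions φ on X of E_μ[φ] − log(E_ν[e^φ]). -/
open MeasureTheory Real ENNReal Filter Topology
open scoped Classical

noncomputable def klDiv {X : Type*} [MeasurableSpace X] (μ ν : Measure X) : EReal :=
  if μ ≪ ν ∧ Integrable (fun x => Real.log (μ.rnDeriv ν x).toReal) μ
  then ((∫ x, Real.log (μ.rnDeriv ν x).toReal ∂μ : ℝ) : EReal)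
  else ⊤

noncomputable def tvDist {X : Type*} [MeasurableSpace X] (μ ν : Measure X) : ℝ :=
  ⨆ A : {A : Set X // MeasurableSet A}, |(μ A).toReal - (ν A).toReal|

/-!
For bounded `φ`, Gibbs' inequality for `μ` against the tilted measure `ν_φ = e^φ ν / E_ν[e^φ]`
reads `0 ≤ KL(μ‖ν_φ) = KL(μ‖ν) - (E_μ[φ] - log E_ν[e^φ])`, which bounds the supremum by the
divergence.

Conversely, every value below `KL(μ‖ν)` is exceeded by some bounded measurable test function:
if `μ ≪ ν`, by the logarithm of the density truncated to `[e^{-n}, e^n]` (monotone convergence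
handles `KL = ∞` as well), and otherwise by `t • 1_A` for a `ν`-null set `A` with `μ A > 0` and
`t` large. A bounded measurable function is the `(μ + ν)`-a.e. limit of continuous functions with
the same bound (density of `C_b` in `L¹(μ + ν)`, a subsequence, and clamping), and the functional
passes to such limits by dominated convergence.
-/

open scoped BoundedContinuousFunction

noncomputable def donskerVaradhan {X : Type*} [MeasurableSpace X] (μ ν : Measure X)
    (f : X → ℝ) : ℝ :=
  ∫ x, f x ∂μ - log (∫ x, exp (f x) ∂ν)

section Integrals

variable {X : Type*} [MeasurableSpace X] {μ : Measure X} {f : X → ℝ}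

lemma integrable_exp_of_abs_le [IsFiniteMeasure μ] (hf : Measurable f) {C : ℝ}
    (hbd : ∀ x, |f x| ≤ C) : Integrable (fun x => exp (f x)) μ :=
  .of_bound hf.exp.aestronglyMeasurable (exp C) <| ae_of_all _ fun x => by
    rw [Real.norm_eq_abs, abs_of_pos (exp_pos _)]
    exact exp_le_exp.2 (le_of_abs_le (hbd x))

lemma exp_neg_le_integral_exp [IsProbabilityMeasure μ] (hf : Measurable f) {C : ℝ}
    (hbd : ∀ x, |f x| ≤ C) : exp (-C) ≤ ∫ x, exp (f x) ∂μ :=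
  calc exp (-C) = ∫ _, exp (-C) ∂μ := by simp
    _ ≤ ∫ x, exp (f x) ∂μ := integral_mono (integrable_const _) (integrable_exp_of_abs_le hf hbd)
        fun x => exp_le_exp.2 (neg_le_of_abs_le (hbd x))

lemma abs_min_natCast_le (t : ℝ) (n : ℕ) : |min t n| ≤ |t| :=
  abs_le.2 ⟨le_min (neg_abs_le t) ((neg_nonpos.2 (abs_nonneg t)).trans n.cast_nonneg),
    (min_le_left _ _).trans (le_abs_self t)⟩

lemma tendsto_min_natCast (t : ℝ) : Tendsto (fun n : ℕ => min t n) atTop (𝓝 t) :=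
  tendsto_const_nhds.congr' <| (tendsto_natCast_atTop_atTop.eventually_ge_atTop t).mono
    fun _ hn => (min_eq_left hn).symm

lemma tendsto_integral_min_natCast (hf : Integrable f μ) :
    Tendsto (fun n : ℕ => ∫ x, min (f x) n ∂μ) atTop (𝓝 (∫ x, f x ∂μ)) :=
  tendsto_integral_of_dominated_convergence (fun x => |f x|)
    (fun _ => hf.1.inf aestronglyMeasurable_const) hf.abs
    (fun n => ae_of_all _ fun x => abs_min_natCast_le (f x) n)
    (ae_of_all _ fun x => tendsto_min_natCast (f x))

lemma integrable_min_of_integrable_min_zero [IsFiniteMeasure μ] (hf : AEStronglyMeasurable f μ)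
    (hneg : Integrable (fun x => min (f x) 0) μ) {a : ℝ} (ha : 0 ≤ a) :
    Integrable (fun x => min (f x) a) μ :=
  (hneg.abs.add (integrable_const a)).mono' (hf.inf aestronglyMeasurable_const) <|
    ae_of_all _ fun x => by
      rw [Real.norm_eq_abs, Pi.add_apply, abs_le]
      constructor <;> linarith [neg_abs_le (min (f x) 0), min_le_min_left (f x) ha,
        min_le_right (f x) a, abs_nonneg (min (f x) 0)]

lemma tendsto_integral_min_natCast_atTop [IsFiniteMeasure μ] (hf : AEStronglyMeasurable f μ)
    (hneg : Integrable (fun x => min (f x) 0) μ) (hf_int : ¬ Integrable f μ) :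
    Tendsto (fun n : ℕ => ∫ x, min (f x) n ∂μ) atTop atTop := by
  set g : ℕ → X → ℝ := fun n x => min (f x) n - min (f x) 0
  have hg_int (n : ℕ) : Integrable (g n) μ :=
    (integrable_min_of_integrable_min_zero hf hneg n.cast_nonneg).sub hneg
  have hg_nonneg (n : ℕ) : 0 ≤ᵐ[μ] g n :=
    ae_of_all _ fun x => sub_nonneg.2 (min_le_min_left _ n.cast_nonneg)
  have hpos_lintegral : ∫⁻ x, ENNReal.ofReal (f x - min (f x) 0) ∂μ = ∞ := by
    by_contra h
    refine hf_int ?_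
    have hpos := (lintegral_ofReal_ne_top_iff_integrable (hf.sub hneg.1)
      (ae_of_all _ fun x => sub_nonneg.2 (min_le_left _ _))).1 h
    simpa using hpos.add hneg
  have hg_lintegral : Tendsto (fun n => ∫⁻ x, ENNReal.ofReal (g n x) ∂μ) atTop (𝓝 ∞) := by
    rw [← hpos_lintegral]
    refine lintegral_tendsto_of_tendsto_of_monotone
      (fun n => (hg_int n).1.aemeasurable.ennreal_ofReal) (ae_of_all _ fun x m n hmn => ?_)
      (ae_of_all _ fun x => (ENNReal.continuous_ofReal.tendsto _).comp
        ((tendsto_min_natCast (f x)).sub_const _))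
    exact ENNReal.ofReal_le_ofReal (sub_le_sub_right (min_le_min_left _ (Nat.cast_le.2 hmn)) _)
  simp_rw [← ofReal_integral_eq_lintegral_ofReal (hg_int _) (hg_nonneg _),
    ENNReal.tendsto_ofReal_nhds_top, g,
    integral_sub (integrable_min_of_integrable_min_zero hf hneg (Nat.cast_nonneg _)) hneg]
    at hg_lintegral
  simpa using tendsto_atTop_add_const_right _ (∫ x, min (f x) 0 ∂μ) hg_lintegral

lemma eventually_lt_integral_min_natCast [IsFiniteMeasure μ] (hf : AEStronglyMeasurable f μ)
    (hneg : Integrable (fun x => min (f x) 0) μ) {c : ℝ}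
    (hc : (c : EReal) < if Integrable f μ then ((∫ x, f x ∂μ : ℝ) : EReal) else ⊤) :
    ∀ᶠ n : ℕ in atTop, c < ∫ x, min (f x) n ∂μ := by
  split_ifs at hc with hf_int
  · exact (tendsto_integral_min_natCast hf_int).eventually (lt_mem_nhds (EReal.coe_lt_coe_iff.1 hc))
  · exact (tendsto_integral_min_natCast_atTop hf hneg hf_int).eventually_gt_atTop c

end Integrals

/-- Gibbs' inequality `0 ≤ KL(μ ‖ ν.tilted f) = KL(μ ‖ ν) - donskerVaradhan μ ν f`. -/
theorem donskerVaradhan_le_integral_llr {X : Type*} [MeasurableSpace X] {μ ν : Measure X}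
    [IsProbabilityMeasure μ] [IsProbabilityMeasure ν] (hμν : μ ≪ ν)
    (h_int : Integrable (llr μ ν) μ) {f : X → ℝ} (hfμ : Integrable f μ)
    (hfν : Integrable (fun x => exp (f x)) ν) :
    donskerVaradhan μ ν f ≤ ∫ x, llr μ ν x ∂μ := by
  have : IsProbabilityMeasure (ν.tilted f) := isProbabilityMeasure_tilted hfν
  have hgibbs := InformationTheory.integral_llr_add_sub_measure_univ_nonneg
    (hμν.trans (absolutelyContinuous_tilted hfν)) (integrable_llr_tilted_right hμν hfμ h_int hfν)
  rw [integral_llr_tilted_right hμν hfμ hfν h_int] at hgibbs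
  simp only [probReal_univ, add_sub_cancel_right] at hgibbs
  rw [donskerVaradhan]
  linarith

theorem tendsto_donskerVaradhan {X : Type*} [MeasurableSpace X] {μ ν : Measure X}
    [IsFiniteMeasure μ] [IsProbabilityMeasure ν] {φ : ℕ → X → ℝ} {ψ : X → ℝ} {C : ℝ}
    (hφ : ∀ n, Measurable (φ n)) (hbd : ∀ n x, |φ n x| ≤ C)
    (hμ : ∀ᵐ x ∂μ, Tendsto (fun n => φ n x) atTop (𝓝 (ψ x)))
    (hν : ∀ᵐ x ∂ν, Tendsto (fun n => φ n x) atTop (𝓝 (ψ x))) :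
    Tendsto (fun n => donskerVaradhan μ ν (φ n)) atTop (𝓝 (donskerVaradhan μ ν ψ)) := by
  have hint : Tendsto (fun n => ∫ x, φ n x ∂μ) atTop (𝓝 (∫ x, ψ x ∂μ)) :=
    tendsto_integral_of_dominated_convergence (fun _ => C) (fun n => (hφ n).aestronglyMeasurable)
      (integrable_const C) (fun n => ae_of_all _ (hbd n)) hμ
  have hexp : Tendsto (fun n => ∫ x, exp (φ n x) ∂ν) atTop (𝓝 (∫ x, exp (ψ x) ∂ν)) :=
    tendsto_integral_of_dominated_convergence (fun _ => exp C)
      (fun n => (hφ n).exp.aestronglyMeasurable) (integrable_const _)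
      (fun n => ae_of_all _ fun x => by
        rw [Real.norm_eq_abs, abs_of_pos (exp_pos _)]
        exact exp_le_exp.2 (le_of_abs_le (hbd n x)))
      (hν.mono fun x hx => (Real.continuous_exp.tendsto _).comp hx)
  have hpos : 0 < ∫ x, exp (ψ x) ∂ν :=
    (exp_pos (-C)).trans_le (ge_of_tendsto' hexp fun n => exp_neg_le_integral_exp (hφ n) (hbd n))
  exact hint.sub (hexp.log hpos.ne')

section Approximation

variable {X : Type*} [TopologicalSpace X] [NormalSpace X] [MeasurableSpace X] [BorelSpace X]
  {ρ : Measure X} [ρ.WeaklyRegular] {ψ : X → ℝ}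

lemma MeasureTheory.Integrable.exists_seq_boundedContinuous_tendsto_ae (hψ : Integrable ψ ρ) :
    ∃ φ : ℕ → X →ᵇ ℝ, ∀ᵐ x ∂ρ, Tendsto (fun n => φ n x) atTop (𝓝 (ψ x)) := by
  choose φ hφ using fun n : ℕ =>
    ((memLp_one_iff_integrable.2 hψ).exists_boundedContinuous_eLpNorm_sub_le one_ne_top
      (ENNReal.inv_ne_zero.2 (natCast_ne_top n))).imp fun _ h => h.1
  have hmeas : TendstoInMeasure ρ (fun n => ⇑(φ n)) atTop ψ := by
    refine tendstoInMeasure_of_tendsto_eLpNorm one_ne_zero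
      (fun n => (φ n).continuous.aestronglyMeasurable) hψ.1 ?_
    refine tendsto_of_tendsto_of_tendsto_of_le_of_le tendsto_const_nhds
      ENNReal.tendsto_inv_nat_nhds_zero (fun _ => zero_le) fun n => ?_
    rw [eLpNorm_sub_comm]
    exact hφ n
  obtain ⟨ns, -, hns⟩ := hmeas.exists_seq_tendsto_ae
  exact ⟨φ ∘ ns, hns⟩

lemma MeasureTheory.Integrable.exists_seq_boundedContinuous_abs_le_tendsto_ae
    (hψ : Integrable ψ ρ) {C : ℝ} (hbd : ∀ x, |ψ x| ≤ C) :
    ∃ φ : ℕ → X →ᵇ ℝ, (∀ n x, |φ n x| ≤ C) ∧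
      ∀ᵐ x ∂ρ, Tendsto (fun n => φ n x) atTop (𝓝 (ψ x)) := by
  obtain ⟨φ, hφ⟩ := hψ.exists_seq_boundedContinuous_tendsto_ae
  refine ⟨fun n => φ n ⊓ .const X C ⊔ .const X (-C), fun n x => ?_, hφ.mono fun x hx => ?_⟩
  · have := (abs_nonneg _).trans (hbd x)
    simp only [BoundedContinuousFunction.coe_sup, BoundedContinuousFunction.coe_inf,
      Pi.sup_apply, Pi.inf_apply, BoundedContinuousFunction.const_apply]
    exact abs_le.2 ⟨le_sup_right, sup_le inf_le_right (by linarith)⟩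
  · have hclamp : Continuous fun t : ℝ => t ⊓ C ⊔ -C := by fun_prop
    have := (hclamp.tendsto (ψ x)).comp hx
    rwa [Function.comp_def, inf_eq_left.2 (le_of_abs_le (hbd x)),
      sup_eq_left.2 (neg_le_of_abs_le (hbd x))] at this

end Approximation

theorem exists_boundedContinuous_lt_donskerVaradhan {X : Type*} [MeasurableSpace X]
    [TopologicalSpace X] [TopologicalSpace.PseudoMetrizableSpace X] [BorelSpace X]
    {μ ν : Measure X} [IsFiniteMeasure μ] [IsProbabilityMeasure ν] {ψ : X → ℝ} (hψ : Measurable ψ) {C : ℝ} (hbd : ∀ x, |ψ x| ≤ C)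
    {c : ℝ} (hc : c < donskerVaradhan μ ν ψ) : ∃ φ : X →ᵇ ℝ, c < donskerVaradhan μ ν φ := by
  have hψ_int : Integrable ψ (μ + ν) := .of_bound hψ.aestronglyMeasurable C (ae_of_all _ hbd)
  obtain ⟨φ, hφC, hφψ⟩ := hψ_int.exists_seq_boundedContinuous_abs_le_tendsto_ae hbd
  rw [ae_add_measure_iff] at hφψ
  obtain ⟨n, hn⟩ := ((tendsto_donskerVaradhan (fun n => (φ n).continuous.measurable) hφC hφψ.1
    hφψ.2).eventually (lt_mem_nhds hc)).exists
  exact ⟨φ n, hn⟩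

section LowerBound

variable {X : Type*} [MeasurableSpace X] {μ ν : Measure X}

theorem exists_lt_donskerVaradhan_of_not_absolutelyContinuous [IsFiniteMeasure μ]
    [IsProbabilityMeasure ν] (hμν : ¬ μ ≪ ν) (c : ℝ) :
    ∃ ψ : X → ℝ, Measurable ψ ∧ (∃ C, ∀ x, |ψ x| ≤ C) ∧ c < donskerVaradhan μ ν ψ := by
  obtain ⟨A, hA, hνA, hμA⟩ : ∃ A, MeasurableSet A ∧ ν A = 0 ∧ μ A ≠ 0 := by
    by_contra! h
    exact hμν (.mk fun A hA hνA => h A hA hνA)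
  have hμA_pos : 0 < μ.real A := ENNReal.toReal_pos hμA (measure_ne_top μ A)
  set t := (|c| + 1) / μ.real A
  refine ⟨A.indicator fun _ => t, measurable_const.indicator hA, ⟨|t|, fun x => ?_⟩, ?_⟩
  · by_cases hx : x ∈ A <;> simp [hx]
  have hexp : (fun x => exp (A.indicator (fun _ => t) x)) =ᵐ[ν] fun _ => 1 := by
    filter_upwards [measure_eq_zero_iff_ae_notMem.1 hνA] with x hx
    simp [hx]
  rw [donskerVaradhan, integral_congr_ae hexp, integral_indicator_const _ hA]
  simp only [smul_eq_mul, integral_const, probReal_univ, one_mul, Real.log_one, sub_zero]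
  rw [mul_div_cancel₀ _ hμA_pos.ne']
  linarith [le_abs_self c]

/-- The density, not its logarithm, is truncated: where `dμ/dν` vanishes `llr μ ν` takes the junk
value `log 0 = 0`, whereas `exp (truncatedLlr μ ν n) ≤ dμ/dν + exp (-n)` everywhere. -/
noncomputable def truncatedLlr (μ ν : Measure X) (n : ℕ) (x : X) : ℝ :=
  log (max (min (μ.rnDeriv ν x).toReal (exp n)) (exp (-n)))

lemma measurable_truncatedLlr (n : ℕ) : Measurable (truncatedLlr μ ν n) :=
  ((Measure.measurable_rnDeriv μ ν).ennreal_toReal.min measurable_const).max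
    measurable_const |>.log

lemma exp_truncatedLlr (n : ℕ) (x : X) :
    exp (truncatedLlr μ ν n x) = max (min (μ.rnDeriv ν x).toReal (exp n)) (exp (-n)) :=
  exp_log ((exp_pos _).trans_le (le_max_right _ _))

lemma abs_truncatedLlr_le (n : ℕ) (x : X) : |truncatedLlr μ ν n x| ≤ n := by
  rw [abs_le, ← exp_le_exp, ← exp_le_exp (x := truncatedLlr μ ν n x), exp_truncatedLlr]
  exact ⟨le_max_right _ _, max_le (min_le_right _ _) (exp_le_exp.2 (by simp))⟩

lemma exp_truncatedLlr_le (n : ℕ) (x : X) :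
    exp (truncatedLlr μ ν n x) ≤ (μ.rnDeriv ν x).toReal + exp (-n) := by
  rw [exp_truncatedLlr]
  exact max_le (by linarith [min_le_left (μ.rnDeriv ν x).toReal (exp n), exp_pos (-n)])
    (le_add_of_nonneg_left toReal_nonneg)

lemma min_llr_le_truncatedLlr {x : X} (hx : 0 < (μ.rnDeriv ν x).toReal) (n : ℕ) :
    min (llr μ ν x) n ≤ truncatedLlr μ ν n x := by
  rw [← exp_le_exp, exp_truncatedLlr, exp_monotone.map_min, llr, exp_log hx]
  exact le_max_left _ _

lemma log_integral_exp_truncatedLlr_le [IsProbabilityMeasure μ] [IsProbabilityMeasure ν]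
    (hμν : μ ≪ ν) (n : ℕ) : log (∫ x, exp (truncatedLlr μ ν n x) ∂ν) ≤ exp (-n) := by
  have hint : Integrable (fun x => exp (truncatedLlr μ ν n x)) ν :=
    integrable_exp_of_abs_le (measurable_truncatedLlr n) (abs_truncatedLlr_le n)
  have hle : ∫ x, exp (truncatedLlr μ ν n x) ∂ν ≤ 1 + exp (-n) :=
    calc ∫ x, exp (truncatedLlr μ ν n x) ∂ν
        ≤ ∫ x, ((μ.rnDeriv ν x).toReal + exp (-n)) ∂ν :=
          integral_mono hint (Measure.integrable_toReal_rnDeriv.add (integrable_const _))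
            (exp_truncatedLlr_le n)
      _ = 1 + exp (-n) := by
          rw [integral_add Measure.integrable_toReal_rnDeriv (integrable_const _),
            Measure.integral_toReal_rnDeriv hμν]
          simp
  have hpos := integral_exp_pos hint
  linarith [log_le_sub_one_of_pos hpos, log_le_log hpos hle]

lemma integrable_min_llr_zero [IsFiniteMeasure μ] [IsFiniteMeasure ν] (hμν : μ ≪ ν) :
    Integrable (fun x => min (llr μ ν x) 0) μ := by
  rw [← integrable_rnDeriv_smul_iff hμν]
  refine .of_bound ((Measure.measurable_rnDeriv μ ν).ennreal_toReal.smul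
    ((measurable_llr μ ν).min measurable_const)).aestronglyMeasurable 1 (ae_of_all _ fun x => ?_)
  have hg : 0 ≤ (μ.rnDeriv ν x).toReal := toReal_nonneg
  rw [smul_eq_mul, llr, Real.norm_eq_abs, abs_le, mul_min_of_nonneg _ _ hg, mul_zero]
  exact ⟨le_min (by linarith [self_sub_one_le_mul_log hg]) (by norm_num),
    (min_le_right _ _).trans zero_le_one⟩

theorem exists_lt_donskerVaradhan_of_absolutelyContinuous [IsProbabilityMeasure μ]
    [IsProbabilityMeasure ν] (hμν : μ ≪ ν) {c : ℝ} (hc : (c : EReal) < klDiv μ ν) :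
    ∃ ψ : X → ℝ, Measurable ψ ∧ (∃ C, ∀ x, |ψ x| ≤ C) ∧ c < donskerVaradhan μ ν ψ := by
  obtain ⟨c', hcc', hc'⟩ := EReal.lt_iff_exists_real_btwn.1 hc
  have hkl : klDiv μ ν =
      if Integrable (llr μ ν) μ then ((∫ x, llr μ ν x ∂μ : ℝ) : EReal) else ⊤ := by
    simp only [klDiv, hμν, true_and]
    rfl
  rw [hkl] at hc'
  have hneg := integrable_min_llr_zero hμν
  have hmin := eventually_lt_integral_min_natCast
    (measurable_llr μ ν).aestronglyMeasurable hneg hc'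
  have hexp : ∀ᶠ n : ℕ in atTop, exp (-n) < c' - c :=
    (tendsto_exp_neg_atTop_nhds_zero.comp tendsto_natCast_atTop_atTop).eventually
      (gt_mem_nhds (sub_pos.2 (EReal.coe_lt_coe_iff.1 hcc')))
  obtain ⟨n, hn_min, hn_exp⟩ := (hmin.and hexp).exists
  refine ⟨truncatedLlr μ ν n, measurable_truncatedLlr n, ⟨n, abs_truncatedLlr_le n⟩, ?_⟩
  have hmono : ∫ x, min (llr μ ν x) n ∂μ ≤ ∫ x, truncatedLlr μ ν n x ∂μ := by
    refine integral_mono_ae (integrable_min_of_integrable_min_zero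
      (measurable_llr μ ν).aestronglyMeasurable hneg n.cast_nonneg)
      (.of_bound (measurable_truncatedLlr n).aestronglyMeasurable n
        (ae_of_all _ (abs_truncatedLlr_le n))) ?_
    filter_upwards [Measure.rnDeriv_pos hμν, hμν.ae_le (Measure.rnDeriv_lt_top μ ν)]
      with x hx_pos hx_top
    exact min_llr_le_truncatedLlr (ENNReal.toReal_pos hx_pos.ne' hx_top.ne) n
  have := log_integral_exp_truncatedLlr_le hμν n
  rw [donskerVaradhan]
  linarith

theorem exists_lt_donskerVaradhan_of_lt_klDiv [IsProbabilityMeasure μ] [IsProbabilityMeasure ν]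
    {c : ℝ} (hc : (c : EReal) < klDiv μ ν) :
    ∃ ψ : X → ℝ, Measurable ψ ∧ (∃ C, ∀ x, |ψ x| ≤ C) ∧ c < donskerVaradhan μ ν ψ := by
  by_cases hμν : μ ≪ ν
  · exact exists_lt_donskerVaradhan_of_absolutelyContinuous hμν hc
  · exact exists_lt_donskerVaradhan_of_not_absolutelyContinuous hμν c

end LowerBound

theorem kl_duality {X : Type*} [MeasurableSpace X] [TopologicalSpace X] [PolishSpace X]
    [BorelSpace X] (μ ν : Measure X) [IsProbabilityMeasure μ] [IsProbabilityMeasure ν] :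
    klDiv μ ν =
      ⨆ φ : BoundedContinuousFunction X ℝ,
        (((∫ x, φ x ∂μ) - Real.log (∫ x, Real.exp (φ x) ∂ν) : ℝ) : EReal) := by
  apply le_antisymm
  · refine EReal.ge_of_forall_gt_iff_ge.1 fun c hc => ?_
    obtain ⟨ψ, hψ, ⟨C, hbd⟩, hcψ⟩ := exists_lt_donskerVaradhan_of_lt_klDiv hc
    obtain ⟨φ, hφ⟩ := exists_boundedContinuous_lt_donskerVaradhan hψ hbd hcψ
    exact (EReal.coe_le_coe_iff.2 hφ.le).trans (le_iSup_of_le φ le_rfl)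
  · refine iSup_le fun φ => ?_
    rw [klDiv]
    split_ifs with h
    · exact EReal.coe_le_coe_iff.2 (donskerVaradhan_le_integral_llr h.1 h.2 (φ.integrable μ)
        (integrable_exp_of_abs_le φ.continuous.measurable φ.norm_coe_le_norm))
    · exact le_top
end

section
/- Let P, Q be weakly compact convex sets of probability measures on a Polish space X. Then KL(P‖Q) = 0 if and only if P ⊆ Q. -/
/-!
`KL(μ‖ν) ≥ 0` and `KL(μ‖μ) = 0` give one direction. Conversely, if `KL(P‖Q) = 0` then every
`μ ∈ P` is approached by `νₙ ∈ Q` with `KL(μ‖νₙ) → 0`. Writing `x = t²`, the pointwise bound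
`(√x - 1)² ≤ x log x + 1 - x` reduces to `t (t log t + 1 - t) ≥ 0`; combined with AM-GM on
`|x - 1| = |√x - 1| (√x + 1)` it yields `∫ |dμ/dν - 1| dν ≤ 2 √KL(μ‖ν)`. Hence `νₙ → μ` weakly,
and `μ ∈ Q` because `Q`, compact in a Hausdorff space, is closed.
-/

open MeasureTheory Real ENNReal Filter Topology
open scoped Classical

noncomputable def genKL {X : Type*} [MeasurableSpace X]
    (P Q : Set (ProbabilityMeasure X)) : EReal :=
  ⨆ μ ∈ P, ⨅ ν ∈ Q, klDiv μ.toMeasure ν.toMeasure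

noncomputable def genV {X : Type*} [MeasurableSpace X]
    (P Q : Set (ProbabilityMeasure X)) : ℝ :=
  max (⨆ μ : P, ⨅ ν : Q, tvDist μ.1.toMeasure ν.1.toMeasure)
      (⨆ ν : Q, ⨅ μ : P, tvDist μ.1.toMeasure ν.1.toMeasure)

def ConvexPM {X : Type*} [MeasurableSpace X] (P : Set (ProbabilityMeasure X)) : Prop :=
  ∀ μ ∈ P, ∀ ν ∈ P, ∀ a b : ℝ≥0∞, a + b = 1 →
    ∃ κ ∈ P, κ.toMeasure = a • μ.toMeasure + b • ν.toMeasure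

def midSet {X : Type*} [MeasurableSpace X]
    (P Q : Set (ProbabilityMeasure X)) : Set (ProbabilityMeasure X) :=
  {κ | ∃ μ ∈ P, ∃ ν ∈ Q, κ.toMeasure = (2:ℝ≥0∞)⁻¹ • μ.toMeasure + (2:ℝ≥0∞)⁻¹ • ν.toMeasure}

noncomputable def genJS {X : Type*} [MeasurableSpace X]
    (P Q : Set (ProbabilityMeasure X)) : EReal :=
  ((1/2 : ℝ) : EReal) * genKL P (midSet P Q) + ((1/2 : ℝ) : EReal) * genKL Q (midSet P Q)

open InformationTheory (klFun klFun_apply klFun_nonneg)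
open scoped BoundedContinuousFunction

lemma sq_sqrt_sub_one_le_klFun {x : ℝ} (hx : 0 ≤ x) : (√x - 1) ^ 2 ≤ klFun x := by
  set s := √x
  have hs : 0 ≤ s := sqrt_nonneg x
  have hgap : klFun x - (s - 1) ^ 2 = 2 * s * klFun s := by
    rw [← sq_sqrt hx, klFun_apply, klFun_apply, Real.log_pow]
    push_cast
    ring
  nlinarith [mul_nonneg hs (klFun_nonneg hs)]

lemma two_mul_mul_abs_sub_one_le (a : ℝ) {x : ℝ} (hx : 0 ≤ x) :
    2 * a * |x - 1| ≤ klFun x + 2 * a ^ 2 * (x + 1) := by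
  set s := √x
  have hs : 0 ≤ s := sqrt_nonneg x
  have habs : |x - 1| = |s - 1| * (s + 1) := by
    rw [← sq_sqrt hx, show s ^ 2 - 1 = (s - 1) * (s + 1) by ring, abs_mul,
      abs_of_nonneg (by linarith : 0 ≤ s + 1)]
  have hamgm : 2 * a * (|s - 1| * (s + 1)) ≤ (s - 1) ^ 2 + a ^ 2 * (s + 1) ^ 2 := by
    nlinarith [sq_nonneg (|s - 1| - a * (s + 1)), sq_abs (s - 1)]
  have hsq : (s + 1) ^ 2 ≤ 2 * (x + 1) := by nlinarith [sq_nonneg (s - 1), sq_sqrt hx]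
  rw [habs]
  nlinarith [sq_sqrt_sub_one_le_klFun hx, mul_le_mul_of_nonneg_left hsq (sq_nonneg a)]

section Divergence

variable {X : Type*} [MeasurableSpace X] {μ ν : Measure X}

lemma klDiv_eq_coe_klDiv [IsProbabilityMeasure μ] [IsProbabilityMeasure ν] :
    klDiv μ ν = (InformationTheory.klDiv μ ν : EReal) := by
  rw [klDiv]
  split_ifs with h
  · have hnonneg := InformationTheory.integral_llr_add_sub_measure_univ_nonneg h.1 h.2
    simp only [probReal_univ, add_sub_cancel_right] at hnonneg
    rw [InformationTheory.klDiv_of_ac_of_integrable h.1 h.2, EReal.coe_ennreal_ofReal]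
    simp only [probReal_univ, add_sub_cancel_right, max_eq_left hnonneg]
    rfl
  · rw [InformationTheory.klDiv_eq_top_iff.2 fun hac hint => h ⟨hac, hint⟩]
    rfl

lemma iInf_klDiv_le_genKL {P Q : Set (ProbabilityMeasure X)} {μ : ProbabilityMeasure X}
    (hμ : μ ∈ P) : ⨅ ν ∈ Q, klDiv μ.toMeasure ν.toMeasure ≤ genKL P Q :=
  le_iSup₂ (f := fun μ (_ : μ ∈ P) => ⨅ ν ∈ Q, klDiv μ.toMeasure ν.toMeasure) μ hμ

lemma integral_abs_toReal_rnDeriv_sub_one_le [IsProbabilityMeasure μ] [IsProbabilityMeasure ν]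
    (h : InformationTheory.klDiv μ ν ≠ ∞) :
    ∫ x, |(μ.rnDeriv ν x).toReal - 1| ∂ν ≤ 2 * √(InformationTheory.klDiv μ ν).toReal := by
  obtain ⟨hac, hint⟩ := InformationTheory.klDiv_ne_top_iff.1 h
  set f : X → ℝ := fun x => (μ.rnDeriv ν x).toReal
  set T := ∫ x, |f x - 1| ∂ν
  set K := (InformationTheory.klDiv μ ν).toReal
  have hf_int : Integrable f ν := Measure.integrable_toReal_rnDeriv
  have hf1_int : Integrable (fun x => f x + 1) ν := hf_int.add (integrable_const 1)
  have hf_one : ∫ x, f x ∂ν = 1 := by simp [f, Measure.integral_toReal_rnDeriv hac]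
  have hklFun_int : Integrable (fun x => klFun (f x)) ν :=
    (InformationTheory.integrable_klFun_rnDeriv_iff hac).2 hint
  have hK : K = ∫ x, klFun (f x) ∂ν := InformationTheory.toReal_klDiv_eq_integral_klFun hac
  have hbound (a : ℝ) : 2 * a * T ≤ K + 4 * a ^ 2 := calc
    2 * a * T = ∫ x, 2 * a * |f x - 1| ∂ν := (integral_const_mul _ _).symm
    _ ≤ ∫ x, klFun (f x) + 2 * a ^ 2 * (f x + 1) ∂ν :=
      integral_mono ((hf_int.sub (integrable_const 1)).abs.const_mul _)
        (hklFun_int.add (hf1_int.const_mul _))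
        fun x => two_mul_mul_abs_sub_one_le a ENNReal.toReal_nonneg
    _ = K + 4 * a ^ 2 := by
      rw [integral_add hklFun_int (hf1_int.const_mul _), integral_const_mul,
        integral_add hf_int (integrable_const 1), hf_one, ← hK]
      simp only [integral_const, probReal_univ, smul_eq_mul, mul_one]
      ring
  have hT : 0 ≤ T := integral_nonneg fun _ => abs_nonneg _
  -- `a = T / 4` is the optimal choice in `hbound`
  have hsq : T ^ 2 ≤ 2 ^ 2 * K := by nlinarith [hbound (T / 4)]
  calc T ≤ √(2 ^ 2 * K) := le_sqrt_of_sq_le hsq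
    _ = 2 * √K := by rw [sqrt_mul (by norm_num), sqrt_sq two_pos.le]

variable [TopologicalSpace X] [OpensMeasurableSpace X]

lemma abs_integral_sub_integral_le [IsFiniteMeasure μ] [IsFiniteMeasure ν] (hac : μ ≪ ν)
    (g : X →ᵇ ℝ) :
    |∫ x, g x ∂μ - ∫ x, g x ∂ν| ≤ ‖g‖ * ∫ x, |(μ.rnDeriv ν x).toReal - 1| ∂ν := by
  have hfg_int : Integrable (fun x => (μ.rnDeriv ν x).toReal * g x) ν := by
    simpa only [smul_eq_mul] using (integrable_rnDeriv_smul_iff hac).2 (g.integrable μ)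
  have habs_int : Integrable (fun x => |(μ.rnDeriv ν x).toReal - 1| * ‖g‖) ν :=
    (Measure.integrable_toReal_rnDeriv.sub (integrable_const 1)).abs.mul_const _
  calc |∫ x, g x ∂μ - ∫ x, g x ∂ν|
      = ‖∫ x, ((μ.rnDeriv ν x).toReal - 1) * g x ∂ν‖ := by
        simp only [← integral_rnDeriv_smul hac, smul_eq_mul, sub_one_mul, Real.norm_eq_abs,
          integral_sub hfg_int (g.integrable ν)]
    _ ≤ ∫ x, |(μ.rnDeriv ν x).toReal - 1| * ‖g‖ ∂ν :=
      norm_integral_le_of_norm_le habs_int <| ae_of_all _ fun x => by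
        rw [norm_mul, Real.norm_eq_abs]
        exact mul_le_mul_of_nonneg_left (g.norm_coe_le_norm x) (abs_nonneg _)
    _ = ‖g‖ * ∫ x, |(μ.rnDeriv ν x).toReal - 1| ∂ν := by rw [integral_mul_const, mul_comm]

namespace MeasureTheory.ProbabilityMeasure

lemma tendsto_of_tendsto_klDiv_zero {ι : Type*} {l : Filter ι} {μ : ProbabilityMeasure X}
    {ν : ι → ProbabilityMeasure X}
    (h : Tendsto (fun i => InformationTheory.klDiv (μ : Measure X) (ν i)) l (𝓝 0)) :
    Tendsto ν l (𝓝 μ) := by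
  rw [tendsto_iff_forall_integral_tendsto]
  intro g
  have hfin : ∀ᶠ i in l, InformationTheory.klDiv (μ : Measure X) (ν i) ≠ ∞ :=
    h.eventually_ne zero_ne_top
  have hbound : Tendsto
      (fun i => ‖g‖ * (2 * √(InformationTheory.klDiv (μ : Measure X) (ν i)).toReal)) l (𝓝 0) := by
    simpa using (((ENNReal.tendsto_toReal zero_ne_top).comp h).sqrt.const_mul 2).const_mul ‖g‖
  rw [tendsto_iff_dist_tendsto_zero]
  refine squeeze_zero' (.of_forall fun _ => dist_nonneg) (hfin.mono fun i hi => ?_) hbound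
  rw [Real.dist_eq, abs_sub_comm]
  exact (abs_integral_sub_integral_le (InformationTheory.klDiv_ne_top_iff.1 hi).1 g).trans
    (mul_le_mul_of_nonneg_left (integral_abs_toReal_rnDeriv_sub_one_le hi) (norm_nonneg g))

lemma mem_of_iInf_klDiv_eq_zero {Q : Set (ProbabilityMeasure X)} (hQ : IsClosed Q)
    {μ : ProbabilityMeasure X} (h : ⨅ ν ∈ Q, InformationTheory.klDiv (μ : Measure X) ν = 0) :
    μ ∈ Q := by
  have hQne : Q.Nonempty := by
    by_contra hQempty
    simp [Set.not_nonempty_iff_eq_empty.1 hQempty] at h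
  obtain ⟨u, -, hu, huS⟩ :=
    exists_seq_tendsto_sInf
      (hQne.image fun ν : ProbabilityMeasure X => InformationTheory.klDiv (μ : Measure X) ν)
      (OrderBot.bddBelow _)
  choose ν hνQ hνu using huS
  rw [sInf_image, h] at hu
  refine hQ.mem_of_tendsto (tendsto_of_tendsto_klDiv_zero (l := atTop) ?_) (.of_forall hνQ)
  simpa only [hνu] using hu

end MeasureTheory.ProbabilityMeasure

end Divergence

theorem genKL_eq_zero_iff_subset_general {X : Type*} [MeasurableSpace X] [TopologicalSpace X]
    [PolishSpace X] [BorelSpace X] (P Q : Set (ProbabilityMeasure X))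
    (hPne : P.Nonempty) (hQc : IsCompact Q) :
    genKL P Q = 0 ↔ P ⊆ Q := by
  constructor
  · intro h μ hμ
    refine ProbabilityMeasure.mem_of_iInf_klDiv_eq_zero hQc.isClosed (le_antisymm ?_ zero_le)
    rw [← EReal.coe_ennreal_le_coe_ennreal_iff, EReal.coe_ennreal_zero, ← h]
    refine le_trans (le_iInf₂ fun ν hν => ?_) (iInf_klDiv_le_genKL hμ)
    rw [klDiv_eq_coe_klDiv]
    exact EReal.coe_ennreal_le_coe_ennreal_iff.2 (iInf₂_le ν hν)
  · intro hPQ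
    refine le_antisymm (iSup₂_le fun μ hμ => (iInf₂_le μ (hPQ hμ)).trans_eq ?_) ?_
    · rw [klDiv_eq_coe_klDiv, InformationTheory.klDiv_self]
      rfl
    · obtain ⟨μ, hμ⟩ := hPne
      refine le_trans (le_iInf₂ fun ν _ => ?_) (iInf_klDiv_le_genKL (Q := Q) hμ)
      rw [klDiv_eq_coe_klDiv]
      exact EReal.coe_ennreal_nonneg _

theorem genKL_eq_zero_iff_subset {X : Type*} [MeasurableSpace X] [TopologicalSpace X]
    [PolishSpace X] [BorelSpace X] (P Q : Set (ProbabilityMeasure X))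
    (hPne : P.Nonempty) (hQne : Q.Nonempty) (hPc : IsCompact P) (hQc : IsCompact Q)
    (hPconv : ConvexPM P) (hQconv : ConvexPM Q) :
    genKL P Q = 0 ↔ P ⊆ Q :=
  genKL_eq_zero_iff_subset_general P Q hPne hQc
end

section
/- The generalized KL divergence is jointly convex: for weakly compact convex sets of probability measures P₁, P₂, Q₁, Q₂ on a Polish space and λ₁, λ₂ ∈ [0,1] with λ₁+λ₂=1, KL(λ₁P₁+λ₂P₂ ‖ λ₁Q₁+λ₂Q₂) ≤ λ₁KL(P₁‖Q₁) + λ₂KL(P₂‖Q₂), where λ₁P₁+λ₂P₂ := {λ₁μ₁+λ₂μ₂ : μ₁∈P₁, μ₂∈P₂}. -/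
open MeasureTheory Real ENNReal Filter Topology
open scoped Classical

def mixSet {X : Type*} [MeasurableSpace X] (l₁ l₂ : ℝ)
    (P Q : Set (ProbabilityMeasure X)) : Set (ProbabilityMeasure X) :=
  {κ | ∃ μ ∈ P, ∃ ν ∈ Q,
    κ.toMeasure = ENNReal.ofReal l₁ • μ.toMeasure + ENNReal.ofReal l₂ • ν.toMeasure}


-- ===== auxiliary lemmas =====

lemma sub_one_le_mul_log {x : ℝ} (hx : 0 ≤ x) : x - 1 ≤ x * Real.log x := by
  rcases eq_or_lt_of_le hx with h | h
  · simp [← h]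
  · have h1 : Real.log x⁻¹ ≤ x⁻¹ - 1 := Real.log_le_sub_one_of_pos (inv_pos.2 h)
    rw [Real.log_inv] at h1
    have h2 : x * (1 - x⁻¹) ≤ x * Real.log x :=
      mul_le_mul_of_nonneg_left (by linarith) hx
    have h3 : x * (1 - x⁻¹) = x - 1 := by field_simp
    linarith

lemma klDiv_ne_bot' {X : Type*} [MeasurableSpace X] (μ ν : Measure X) : klDiv μ ν ≠ ⊥ := by
  rw [klDiv]; split_ifs <;> simp

lemma klDiv_nonneg {X : Type*} [MeasurableSpace X] (μ ν : Measure X)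
    [IsProbabilityMeasure μ] [IsProbabilityMeasure ν] :
    0 ≤ klDiv μ ν := by
  rw [klDiv]; split_ifs with h
  · obtain ⟨hac, hint⟩ := h
    rw [show ((0 : EReal) = ((0 : ℝ) : EReal)) by simp, EReal.coe_le_coe_iff]
    rw [← MeasureTheory.integral_rnDeriv_smul hac (f := fun x => Real.log (μ.rnDeriv ν x).toReal)]
    have hint2 : Integrable (fun x => (μ.rnDeriv ν x).toReal • Real.log (μ.rnDeriv ν x).toReal) ν :=
      (MeasureTheory.integrable_rnDeriv_smul_iff hac).2 hint
    have hint3 : Integrable (fun x => (μ.rnDeriv ν x).toReal - 1) ν :=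
      (Measure.integrable_toReal_rnDeriv).sub (integrable_const 1)
    have hmono : ∫ x, ((μ.rnDeriv ν x).toReal - 1) ∂ν
        ≤ ∫ x, (μ.rnDeriv ν x).toReal • Real.log (μ.rnDeriv ν x).toReal ∂ν := by
      refine integral_mono hint3 hint2 fun x => ?_
      simpa [smul_eq_mul] using sub_one_le_mul_log (ENNReal.toReal_nonneg (a := μ.rnDeriv ν x))
    have hzero : ∫ x, ((μ.rnDeriv ν x).toReal - 1) ∂ν = 0 := by
      rw [integral_sub Measure.integrable_toReal_rnDeriv (integrable_const 1),
        Measure.integral_toReal_rnDeriv hac]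
      simp
    linarith
  · exact le_top

lemma EReal.exists_real_of {x : EReal} (hT : x ≠ ⊤) (hB : x ≠ ⊥) : ∃ r : ℝ, x = (r : EReal) := by
  induction x with
  | bot => exact absurd rfl hB
  | coe r => exact ⟨r, rfl⟩
  | top => exact absurd rfl hT

lemma EReal.ne_bot_of_nonneg {x : EReal} (h : 0 ≤ x) : x ≠ ⊥ := by
  intro hb; rw [hb] at h; exact absurd h (by simp)

lemma EReal.coe_mul_ne_bot {l : ℝ} (hl : 0 < l) {x : EReal} (hx : x ≠ ⊥) :
    (l : EReal) * x ≠ ⊥ := by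
  induction x with
  | bot => exact absurd rfl hx
  | coe r => rw [← EReal.coe_mul]; exact EReal.coe_ne_bot _
  | top => rw [EReal.coe_mul_top_of_pos hl]; simp

lemma neg_one_le_mul_log {x : ℝ} (hx : 0 ≤ x) : -1 ≤ x * Real.log x := by
  rcases eq_or_lt_of_le hx with h | h
  · simp [← h]
  · have h1 : Real.log x⁻¹ ≤ x⁻¹ - 1 := Real.log_le_sub_one_of_pos (inv_pos.2 h)
    rw [Real.log_inv] at h1
    have h2 : x * (1 - x⁻¹) ≤ x * Real.log x :=
      mul_le_mul_of_nonneg_left (by linarith) hx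
    have h3 : x * (1 - x⁻¹) = x - 1 := by field_simp
    linarith

lemma pt_ineq {a b p₁ p₂ q₁ q₂ r₁ r₂ : ℝ} (ha : 0 ≤ a) (hb : 0 ≤ b)
    (hq₁ : 0 ≤ q₁) (hq₂ : 0 ≤ q₂) (hr₁ : 0 ≤ r₁) (hr₂ : 0 ≤ r₂)
    (hq : a * q₁ + b * q₂ = 1) (hp₁ : p₁ = r₁ * q₁) (hp₂ : p₂ = r₂ * q₂) :
    (a * p₁ + b * p₂) * Real.log (a * p₁ + b * p₂)
      ≤ a * (p₁ * Real.log r₁) + b * (p₂ * Real.log r₂) := by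
  have h := Real.convexOn_mul_log.2 (Set.mem_Ici.2 hr₁) (Set.mem_Ici.2 hr₂)
    (mul_nonneg ha hq₁) (mul_nonneg hb hq₂) hq
  simp only [smul_eq_mul] at h
  have harg : a * p₁ + b * p₂ = a * q₁ * r₁ + b * q₂ * r₂ := by rw [hp₁, hp₂]; ring
  rw [harg, hp₁, hp₂]
  calc (a * q₁ * r₁ + b * q₂ * r₂) * Real.log (a * q₁ * r₁ + b * q₂ * r₂)
      ≤ a * q₁ * (r₁ * Real.log r₁) + b * q₂ * (r₂ * Real.log r₂) := h
    _ = a * (r₁ * q₁ * Real.log r₁) + b * (r₂ * q₂ * Real.log r₂) := by ring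

lemma isProbMix {X : Type*} [MeasurableSpace X] {l₁ l₂ : ℝ} (hl₁ : 0 ≤ l₁) (hl₂ : 0 ≤ l₂) (hsum : l₁ + l₂ = 1)
    (μ ν : Measure X) [IsProbabilityMeasure μ] [IsProbabilityMeasure ν] :
    IsProbabilityMeasure (ENNReal.ofReal l₁ • μ + ENNReal.ofReal l₂ • ν) := by
  constructor
  simp only [Measure.add_apply, Measure.smul_apply, measure_univ, smul_eq_mul, mul_one]
  rw [← ENNReal.ofReal_add hl₁ hl₂, hsum, ENNReal.ofReal_one]

lemma isFinSmul {X : Type*} [MeasurableSpace X] (l : ℝ) (μ : Measure X) [IsProbabilityMeasure μ] :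
    IsFiniteMeasure (ENNReal.ofReal l • μ) := by
  constructor
  simp only [Measure.smul_apply, measure_univ, smul_eq_mul, mul_one]
  exact ENNReal.ofReal_lt_top

lemma klDiv_mix_le {X : Type*} [MeasurableSpace X] (μ₁ μ₂ ν₁ ν₂ : Measure X) [IsProbabilityMeasure μ₁] [IsProbabilityMeasure μ₂]
    [IsProbabilityMeasure ν₁] [IsProbabilityMeasure ν₂] {l₁ l₂ : ℝ}
    (h₁ : 0 < l₁) (h₂ : 0 < l₂) (hsum : l₁ + l₂ = 1)
    (hac₁ : μ₁ ≪ ν₁) (hint₁ : Integrable (fun x => Real.log (μ₁.rnDeriv ν₁ x).toReal) μ₁)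
    (hac₂ : μ₂ ≪ ν₂) (hint₂ : Integrable (fun x => Real.log (μ₂.rnDeriv ν₂ x).toReal) μ₂) :
    klDiv (ENNReal.ofReal l₁ • μ₁ + ENNReal.ofReal l₂ • μ₂)
        (ENNReal.ofReal l₁ • ν₁ + ENNReal.ofReal l₂ • ν₂)
      ≤ ((l₁ * ∫ x, Real.log (μ₁.rnDeriv ν₁ x).toReal ∂μ₁
          + l₂ * ∫ x, Real.log (μ₂.rnDeriv ν₂ x).toReal ∂μ₂ : ℝ) : EReal) := by
  set a := ENNReal.ofReal l₁ with ha
  set b := ENNReal.ofReal l₂ with hb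
  set μ : Measure X := a • μ₁ + b • μ₂ with hμdef
  set ν : Measure X := a • ν₁ + b • ν₂ with hνdef
  haveI : IsFiniteMeasure (a • μ₁) := isFinSmul l₁ μ₁
  haveI : IsFiniteMeasure (b • μ₂) := isFinSmul l₂ μ₂
  haveI : IsFiniteMeasure (a • ν₁) := isFinSmul l₁ ν₁
  haveI : IsFiniteMeasure (b • ν₂) := isFinSmul l₂ ν₂
  haveI : IsProbabilityMeasure μ := isProbMix h₁.le h₂.le hsum μ₁ μ₂
  haveI : IsProbabilityMeasure ν := isProbMix h₁.le h₂.le hsum ν₁ ν₂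
  have ha0 : a ≠ 0 := by simp [ha, ENNReal.ofReal_eq_zero]; linarith
  have hb0 : b ≠ 0 := by simp [hb, ENNReal.ofReal_eq_zero]; linarith
  have haT : a ≠ ⊤ := ENNReal.ofReal_ne_top
  have hbT : b ≠ ⊤ := ENNReal.ofReal_ne_top
  have hν₁ν : ν₁ ≪ ν := by
    refine Measure.AbsolutelyContinuous.mk fun s hms hs => ?_
    rw [hνdef] at hs
    simp only [Measure.add_apply, Measure.smul_apply, smul_eq_mul, add_eq_zero,
      mul_eq_zero] at hs
    exact hs.1.resolve_left ha0
  have hν₂ν : ν₂ ≪ ν := by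
    refine Measure.AbsolutelyContinuous.mk fun s hms hs => ?_
    rw [hνdef] at hs
    simp only [Measure.add_apply, Measure.smul_apply, smul_eq_mul, add_eq_zero,
      mul_eq_zero] at hs
    exact hs.2.resolve_left hb0
  have hμ₁ν : μ₁ ≪ ν := hac₁.trans hν₁ν
  have hμ₂ν : μ₂ ≪ ν := hac₂.trans hν₂ν
  have hμν : μ ≪ ν := by
    refine Measure.AbsolutelyContinuous.mk fun s hms hs => ?_
    rw [hμdef]
    simp only [Measure.add_apply, Measure.smul_apply, smul_eq_mul, hμ₁ν hs, hμ₂ν hs,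
      mul_zero, add_zero]
  -- a.e. identities
  have F1 : (fun x => (μ.rnDeriv ν x).toReal) =ᵐ[ν]
      (fun x => l₁ * ((μ₁.rnDeriv ν₁ x).toReal * (ν₁.rnDeriv ν x).toReal)
        + l₂ * ((μ₂.rnDeriv ν₂ x).toReal * (ν₂.rnDeriv ν x).toReal)) := by
    have e1 : μ.rnDeriv ν =ᵐ[ν] (a • μ₁).rnDeriv ν + (b • μ₂).rnDeriv ν :=
      Measure.rnDeriv_add (a • μ₁) (b • μ₂) ν
    have e2 : (a • μ₁).rnDeriv ν =ᵐ[ν] a • μ₁.rnDeriv ν :=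
      Measure.rnDeriv_smul_left_of_ne_top μ₁ ν haT
    have e3 : (b • μ₂).rnDeriv ν =ᵐ[ν] b • μ₂.rnDeriv ν :=
      Measure.rnDeriv_smul_left_of_ne_top μ₂ ν hbT
    have e4 : μ₁.rnDeriv ν₁ * ν₁.rnDeriv ν =ᵐ[ν] μ₁.rnDeriv ν :=
      Measure.rnDeriv_mul_rnDeriv hac₁
    have e5 : μ₂.rnDeriv ν₂ * ν₂.rnDeriv ν =ᵐ[ν] μ₂.rnDeriv ν :=
      Measure.rnDeriv_mul_rnDeriv hac₂
    have e6 := Measure.rnDeriv_lt_top μ₁ ν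
    have e7 := Measure.rnDeriv_lt_top μ₂ ν
    filter_upwards [e1, e2, e3, e4, e5, e6, e7] with x h1 h2 h3 h4 h5 h6 h7
    rw [h1, Pi.add_apply, h2, h3, Pi.smul_apply, Pi.smul_apply, smul_eq_mul, smul_eq_mul,
      ENNReal.toReal_add (by finiteness) (by finiteness), ENNReal.toReal_mul,
      ENNReal.toReal_mul, ← h4, ← h5, Pi.mul_apply, Pi.mul_apply, ENNReal.toReal_mul,
      ENNReal.toReal_mul]
    rw [ha, hb, ENNReal.toReal_ofReal h₁.le, ENNReal.toReal_ofReal h₂.le]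
  have F2 : (fun x => l₁ * (ν₁.rnDeriv ν x).toReal + l₂ * (ν₂.rnDeriv ν x).toReal)
      =ᵐ[ν] (fun _ => (1 : ℝ)) := by
    have e1 : ν.rnDeriv ν =ᵐ[ν] (a • ν₁).rnDeriv ν + (b • ν₂).rnDeriv ν :=
      Measure.rnDeriv_add (a • ν₁) (b • ν₂) ν
    have e2 : (a • ν₁).rnDeriv ν =ᵐ[ν] a • ν₁.rnDeriv ν :=
      Measure.rnDeriv_smul_left_of_ne_top ν₁ ν haT
    have e3 : (b • ν₂).rnDeriv ν =ᵐ[ν] b • ν₂.rnDeriv ν :=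
      Measure.rnDeriv_smul_left_of_ne_top ν₂ ν hbT
    have e6 := Measure.rnDeriv_lt_top ν₁ ν
    have e7 := Measure.rnDeriv_lt_top ν₂ ν
    have e0 := Measure.rnDeriv_self ν
    filter_upwards [e1, e2, e3, e6, e7, e0] with x h1 h2 h3 h6 h7 h0
    have : (ν.rnDeriv ν x).toReal = 1 := by rw [h0]; simp
    rw [← this, h1, Pi.add_apply, h2, h3, Pi.smul_apply, Pi.smul_apply, smul_eq_mul,
      smul_eq_mul, ENNReal.toReal_add (by finiteness) (by finiteness), ENNReal.toReal_mul,
      ENNReal.toReal_mul, ha, hb, ENNReal.toReal_ofReal h₁.le, ENNReal.toReal_ofReal h₂.le]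
  -- integrability
  have int₁' : Integrable
      (fun x => (μ₁.rnDeriv ν₁ x).toReal • Real.log (μ₁.rnDeriv ν₁ x).toReal) ν₁ :=
    (MeasureTheory.integrable_rnDeriv_smul_iff hac₁).2 hint₁
  have int₂' : Integrable
      (fun x => (μ₂.rnDeriv ν₂ x).toReal • Real.log (μ₂.rnDeriv ν₂ x).toReal) ν₂ :=
    (MeasureTheory.integrable_rnDeriv_smul_iff hac₂).2 hint₂
  have int₁ : Integrable (fun x => (ν₁.rnDeriv ν x).toReal •
      ((μ₁.rnDeriv ν₁ x).toReal • Real.log (μ₁.rnDeriv ν₁ x).toReal)) ν :=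
    (MeasureTheory.integrable_rnDeriv_smul_iff hν₁ν).2 int₁'
  have int₂ : Integrable (fun x => (ν₂.rnDeriv ν x).toReal •
      ((μ₂.rnDeriv ν₂ x).toReal • Real.log (μ₂.rnDeriv ν₂ x).toReal)) ν :=
    (MeasureTheory.integrable_rnDeriv_smul_iff hν₂ν).2 int₂'
  set G : X → ℝ := fun x => l₁ * ((ν₁.rnDeriv ν x).toReal *
      ((μ₁.rnDeriv ν₁ x).toReal * Real.log (μ₁.rnDeriv ν₁ x).toReal))
    + l₂ * ((ν₂.rnDeriv ν x).toReal *
      ((μ₂.rnDeriv ν₂ x).toReal * Real.log (μ₂.rnDeriv ν₂ x).toReal)) with hG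
  have intG : Integrable G ν := by
    simp only [smul_eq_mul] at int₁ int₂
    exact (int₁.const_mul l₁).add (int₂.const_mul l₂)
  -- pointwise inequality a.e.
  have Hle : ∀ᵐ x ∂ν, (μ.rnDeriv ν x).toReal * Real.log (μ.rnDeriv ν x).toReal ≤ G x := by
    filter_upwards [F1, F2] with x h1 h2
    rw [h1]
    calc (l₁ * ((μ₁.rnDeriv ν₁ x).toReal * (ν₁.rnDeriv ν x).toReal)
          + l₂ * ((μ₂.rnDeriv ν₂ x).toReal * (ν₂.rnDeriv ν x).toReal)) *
        Real.log (l₁ * ((μ₁.rnDeriv ν₁ x).toReal * (ν₁.rnDeriv ν x).toReal)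
          + l₂ * ((μ₂.rnDeriv ν₂ x).toReal * (ν₂.rnDeriv ν x).toReal))
        ≤ l₁ * (((μ₁.rnDeriv ν₁ x).toReal * (ν₁.rnDeriv ν x).toReal) *
            Real.log (μ₁.rnDeriv ν₁ x).toReal)
          + l₂ * (((μ₂.rnDeriv ν₂ x).toReal * (ν₂.rnDeriv ν x).toReal) *
            Real.log (μ₂.rnDeriv ν₂ x).toReal) :=
        pt_ineq h₁.le h₂.le ENNReal.toReal_nonneg ENNReal.toReal_nonneg
          ENNReal.toReal_nonneg ENNReal.toReal_nonneg h2 rfl rfl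
      _ = G x := by rw [hG]; ring
  -- integrability of LHS integrand
  have measp : AEStronglyMeasurable
      (fun x => (μ.rnDeriv ν x).toReal * Real.log (μ.rnDeriv ν x).toReal) ν := by
    have m1 : Measurable fun x => (μ.rnDeriv ν x).toReal :=
      (Measure.measurable_rnDeriv μ ν).ennreal_toReal
    exact (m1.mul (Real.measurable_log.comp m1)).aestronglyMeasurable
  have intLHS : Integrable
      (fun x => (μ.rnDeriv ν x).toReal * Real.log (μ.rnDeriv ν x).toReal) ν := by
    have intg2 : Integrable (fun x => |G x| + 1) ν := by
      simpa using intG.abs.add (integrable_const 1)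
    refine Integrable.mono' intg2 measp ?_
    filter_upwards [Hle] with x hx
    rw [Real.norm_eq_abs, abs_le]
    constructor
    · have := neg_one_le_mul_log (ENNReal.toReal_nonneg (a := μ.rnDeriv ν x))
      have h0 : (0:ℝ) ≤ |G x| := abs_nonneg _
      linarith
    · have h0 : G x ≤ |G x| := le_abs_self _
      linarith
  have intlogμ : Integrable (fun x => Real.log (μ.rnDeriv ν x).toReal) μ := by
    refine (MeasureTheory.integrable_rnDeriv_smul_iff hμν).1 ?_
    simpa [smul_eq_mul] using intLHS
  rw [klDiv, if_pos ⟨hμν, intlogμ⟩, EReal.coe_le_coe_iff]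
  have e₁ : ∫ x, Real.log (μ.rnDeriv ν x).toReal ∂μ
      = ∫ x, (μ.rnDeriv ν x).toReal * Real.log (μ.rnDeriv ν x).toReal ∂ν := by
    rw [← MeasureTheory.integral_rnDeriv_smul hμν
      (f := fun x => Real.log (μ.rnDeriv ν x).toReal)]
    simp [smul_eq_mul]
  have e₂ : ∫ x, G x ∂ν = l₁ * ∫ x, Real.log (μ₁.rnDeriv ν₁ x).toReal ∂μ₁
      + l₂ * ∫ x, Real.log (μ₂.rnDeriv ν₂ x).toReal ∂μ₂ := by
    have i₁ : ∫ x, (ν₁.rnDeriv ν x).toReal •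
        ((μ₁.rnDeriv ν₁ x).toReal • Real.log (μ₁.rnDeriv ν₁ x).toReal) ∂ν
        = ∫ x, Real.log (μ₁.rnDeriv ν₁ x).toReal ∂μ₁ := by
      rw [MeasureTheory.integral_rnDeriv_smul hν₁ν, MeasureTheory.integral_rnDeriv_smul hac₁]
    have i₂ : ∫ x, (ν₂.rnDeriv ν x).toReal •
        ((μ₂.rnDeriv ν₂ x).toReal • Real.log (μ₂.rnDeriv ν₂ x).toReal) ∂ν
        = ∫ x, Real.log (μ₂.rnDeriv ν₂ x).toReal ∂μ₂ := by
      rw [MeasureTheory.integral_rnDeriv_smul hν₂ν, MeasureTheory.integral_rnDeriv_smul hac₂]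
    simp only [smul_eq_mul] at i₁ i₂ int₁ int₂
    rw [hG]
    rw [integral_add (int₁.const_mul l₁) (int₂.const_mul l₂), integral_const_mul,
      integral_const_mul, i₁, i₂]
  rw [e₁, ← e₂]
  exact integral_mono_ae intLHS intG Hle


lemma klDiv_mix_le'' {X : Type*} [MeasurableSpace X] (μ₁ μ₂ ν₁ ν₂ : Measure X)
    [IsProbabilityMeasure μ₁] [IsProbabilityMeasure μ₂]
    [IsProbabilityMeasure ν₁] [IsProbabilityMeasure ν₂] {l₁ l₂ : ℝ}
    (h₁ : 0 < l₁) (h₂ : 0 < l₂) (hsum : l₁ + l₂ = 1) :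
    klDiv (ENNReal.ofReal l₁ • μ₁ + ENNReal.ofReal l₂ • μ₂)
        (ENNReal.ofReal l₁ • ν₁ + ENNReal.ofReal l₂ • ν₂)
      ≤ (l₁ : EReal) * klDiv μ₁ ν₁ + (l₂ : EReal) * klDiv μ₂ ν₂ := by
  by_cases hc₁ : μ₁ ≪ ν₁ ∧ Integrable (fun x => Real.log (μ₁.rnDeriv ν₁ x).toReal) μ₁
  · by_cases hc₂ : μ₂ ≪ ν₂ ∧ Integrable (fun x => Real.log (μ₂.rnDeriv ν₂ x).toReal) μ₂
    · refine (klDiv_mix_le μ₁ μ₂ ν₁ ν₂ h₁ h₂ hsum hc₁.1 hc₁.2 hc₂.1 hc₂.2).trans (le_of_eq ?_)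
      rw [klDiv, if_pos hc₁, klDiv, if_pos hc₂, EReal.coe_add, EReal.coe_mul, EReal.coe_mul]
    · have h2top : klDiv μ₂ ν₂ = ⊤ := by rw [klDiv, if_neg hc₂]
      have h1nb : (l₁ : EReal) * klDiv μ₁ ν₁ ≠ ⊥ :=
        EReal.coe_mul_ne_bot h₁ (klDiv_ne_bot' μ₁ ν₁)
      rw [h2top, EReal.coe_mul_top_of_pos h₂, EReal.add_top_of_ne_bot h1nb]
      exact le_top
  · have h1top : klDiv μ₁ ν₁ = ⊤ := by rw [klDiv, if_neg hc₁]
    have h2nb : (l₂ : EReal) * klDiv μ₂ ν₂ ≠ ⊥ :=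
      EReal.coe_mul_ne_bot h₂ (klDiv_ne_bot' μ₂ ν₂)
    rw [h1top, EReal.coe_mul_top_of_pos h₁, EReal.top_add_of_ne_bot h2nb]
    exact le_top

lemma mixSet_eq_right {X : Type*} [MeasurableSpace X] {P Q : Set (ProbabilityMeasure X)}
    (hP : P.Nonempty) : mixSet 0 1 P Q = Q := by
  ext κ
  constructor
  · rintro ⟨μ, hμ, ν, hν, h⟩
    simp only [ENNReal.ofReal_zero, ENNReal.ofReal_one, zero_smul, one_smul, zero_add] at h
    have : κ = ν := MeasureTheory.ProbabilityMeasure.toMeasure_injective h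
    rwa [this]
  · intro hκ
    obtain ⟨μ, hμ⟩ := hP
    exact ⟨μ, hμ, κ, hκ, by simp⟩

lemma mixSet_eq_left {X : Type*} [MeasurableSpace X] {P Q : Set (ProbabilityMeasure X)}
    (hQ : Q.Nonempty) : mixSet 1 0 P Q = P := by
  ext κ
  constructor
  · rintro ⟨μ, hμ, ν, hν, h⟩
    simp only [ENNReal.ofReal_zero, ENNReal.ofReal_one, zero_smul, one_smul, add_zero] at h
    have : κ = μ := MeasureTheory.ProbabilityMeasure.toMeasure_injective h
    rwa [this]
  · intro hκ
    obtain ⟨ν, hν⟩ := hQ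
    exact ⟨κ, hκ, ν, hν, by simp⟩

-- ===== end auxiliary lemmas =====


theorem genKL_jointly_convex {X : Type*} [MeasurableSpace X] [TopologicalSpace X]
    [PolishSpace X] [BorelSpace X] (P₁ P₂ Q₁ Q₂ : Set (ProbabilityMeasure X))
    (hP₁ : P₁.Nonempty ∧ IsCompact P₁ ∧ ConvexPM P₁)
    (hP₂ : P₂.Nonempty ∧ IsCompact P₂ ∧ ConvexPM P₂)
    (hQ₁ : Q₁.Nonempty ∧ IsCompact Q₁ ∧ ConvexPM Q₁)
    (hQ₂ : Q₂.Nonempty ∧ IsCompact Q₂ ∧ ConvexPM Q₂)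
    (l₁ l₂ : ℝ) (hl₁ : 0 ≤ l₁) (hl₂ : 0 ≤ l₂) (hsum : l₁ + l₂ = 1) :
    genKL (mixSet l₁ l₂ P₁ P₂) (mixSet l₁ l₂ Q₁ Q₂)
      ≤ (l₁ : EReal) * genKL P₁ Q₁ + (l₂ : EReal) * genKL P₂ Q₂ := by
  obtain ⟨hP₁n, -, -⟩ := hP₁
  obtain ⟨hP₂n, -, -⟩ := hP₂
  obtain ⟨hQ₁n, -, -⟩ := hQ₁
  obtain ⟨hQ₂n, -, -⟩ := hQ₂
  rcases eq_or_lt_of_le hl₁ with h10 | h1pos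
  · have hl2 : l₂ = 1 := by linarith
    subst hl2
    have hl1 : l₁ = 0 := h10.symm
    subst hl1
    rw [mixSet_eq_right hP₁n, mixSet_eq_right hQ₁n]
    simp
  rcases eq_or_lt_of_le hl₂ with h20 | h2pos
  · have hl1 : l₁ = 1 := by linarith
    subst hl1
    have hl2 : l₂ = 0 := h20.symm
    subst hl2
    rw [mixSet_eq_left hP₂n, mixSet_eq_left hQ₂n]
    simp
  refine iSup₂_le fun κ hκ => ?_
  obtain ⟨μ₁, hμ₁, μ₂, hμ₂, hκeq⟩ := hκ
  set I₁ : EReal := ⨅ ν ∈ Q₁, klDiv μ₁.toMeasure ν.toMeasure with hI₁def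
  set I₂ : EReal := ⨅ ν ∈ Q₂, klDiv μ₂.toMeasure ν.toMeasure with hI₂def
  have hI₁le : I₁ ≤ genKL P₁ Q₁ :=
    le_iSup₂ (f := fun μ (_ : μ ∈ P₁) => ⨅ ν ∈ Q₁, klDiv μ.toMeasure ν.toMeasure) μ₁ hμ₁
  have hI₂le : I₂ ≤ genKL P₂ Q₂ :=
    le_iSup₂ (f := fun μ (_ : μ ∈ P₂) => ⨅ ν ∈ Q₂, klDiv μ.toMeasure ν.toMeasure) μ₂ hμ₂
  have key : (⨅ ν ∈ mixSet l₁ l₂ Q₁ Q₂, klDiv κ.toMeasure ν.toMeasure)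
      ≤ (l₁ : EReal) * I₁ + (l₂ : EReal) * I₂ := by
    by_cases hT : (l₁ : EReal) * I₁ + (l₂ : EReal) * I₂ = ⊤
    · rw [hT]; exact le_top
    have hI₁0 : (0 : EReal) ≤ I₁ := le_iInf₂ fun ν hν => klDiv_nonneg _ _
    have hI₂0 : (0 : EReal) ≤ I₂ := le_iInf₂ fun ν hν => klDiv_nonneg _ _
    have hprod₁ : (l₁ : EReal) * I₁ ≠ ⊥ :=
      EReal.coe_mul_ne_bot h1pos (EReal.ne_bot_of_nonneg hI₁0)
    have hprod₂ : (l₂ : EReal) * I₂ ≠ ⊥ :=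
      EReal.coe_mul_ne_bot h2pos (EReal.ne_bot_of_nonneg hI₂0)
    have hI₁T : I₁ ≠ ⊤ := by
      intro h
      exact hT (by rw [h, EReal.coe_mul_top_of_pos h1pos, EReal.top_add_of_ne_bot hprod₂])
    have hI₂T : I₂ ≠ ⊤ := by
      intro h
      exact hT (by rw [h, EReal.coe_mul_top_of_pos h2pos, EReal.add_top_of_ne_bot hprod₁])
    obtain ⟨x₁, hx₁⟩ := EReal.exists_real_of hI₁T (EReal.ne_bot_of_nonneg hI₁0)
    obtain ⟨x₂, hx₂⟩ := EReal.exists_real_of hI₂T (EReal.ne_bot_of_nonneg hI₂0)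
    have hSE : (l₁ : EReal) * I₁ + (l₂ : EReal) * I₂ = ((l₁ * x₁ + l₂ * x₂ : ℝ) : EReal) := by
      rw [hx₁, hx₂, ← EReal.coe_mul, ← EReal.coe_mul, ← EReal.coe_add]
    set S : ℝ := l₁ * x₁ + l₂ * x₂ with hSdef
    rw [hSE]
    by_contra hcon
    rw [not_le] at hcon
    obtain ⟨c, hc1, hc2⟩ := EReal.exists_between_coe_real hcon
    have hcS : S < c := by exact_mod_cast hc1
    set δ₁ : ℝ := (c - S) / 2 / l₁ with hδ₁
    set δ₂ : ℝ := (c - S) / 2 / l₂ with hδ₂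
    have hδ₁pos : 0 < δ₁ := div_pos (by linarith) h1pos
    have hδ₂pos : 0 < δ₂ := div_pos (by linarith) h2pos
    have hex₁ : ∃ ν ∈ Q₁, klDiv μ₁.toMeasure ν.toMeasure < ((x₁ + δ₁ : ℝ) : EReal) := by
      have h1 : I₁ < ((x₁ + δ₁ : ℝ) : EReal) := by
        rw [hx₁]; exact EReal.coe_lt_coe_iff.2 (by linarith)
      simpa [hI₁def, iInf_lt_iff] using h1
    have hex₂ : ∃ ν ∈ Q₂, klDiv μ₂.toMeasure ν.toMeasure < ((x₂ + δ₂ : ℝ) : EReal) := by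
      have h2 : I₂ < ((x₂ + δ₂ : ℝ) : EReal) := by
        rw [hx₂]; exact EReal.coe_lt_coe_iff.2 (by linarith)
      simpa [hI₂def, iInf_lt_iff] using h2
    obtain ⟨ν₁, hν₁Q, hk₁⟩ := hex₁
    obtain ⟨ν₂, hν₂Q, hk₂⟩ := hex₂
    haveI hmixprob : IsProbabilityMeasure
        (ENNReal.ofReal l₁ • ν₁.toMeasure + ENNReal.ofReal l₂ • ν₂.toMeasure) :=
      isProbMix hl₁ hl₂ hsum _ _
    set νm : ProbabilityMeasure X :=
      ⟨ENNReal.ofReal l₁ • ν₁.toMeasure + ENNReal.ofReal l₂ • ν₂.toMeasure, hmixprob⟩ with hνm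
    have hνmem : νm ∈ mixSet l₁ l₂ Q₁ Q₂ := ⟨ν₁, hν₁Q, ν₂, hν₂Q, rfl⟩
    have hinf_le : (⨅ ν ∈ mixSet l₁ l₂ Q₁ Q₂, klDiv κ.toMeasure ν.toMeasure)
        ≤ klDiv κ.toMeasure νm.toMeasure := iInf₂_le νm hνmem
    have hmix : klDiv κ.toMeasure νm.toMeasure
        ≤ (l₁ : EReal) * klDiv μ₁.toMeasure ν₁.toMeasure
          + (l₂ : EReal) * klDiv μ₂.toMeasure ν₂.toMeasure := by
      rw [hκeq]
      exact klDiv_mix_le'' _ _ _ _ h1pos h2pos hsum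
    have hfin : (l₁ : EReal) * klDiv μ₁.toMeasure ν₁.toMeasure
        + (l₂ : EReal) * klDiv μ₂.toMeasure ν₂.toMeasure ≤ ((c : ℝ) : EReal) := by
      have step : (l₁ : EReal) * klDiv μ₁.toMeasure ν₁.toMeasure
          + (l₂ : EReal) * klDiv μ₂.toMeasure ν₂.toMeasure
          ≤ (l₁ : EReal) * ((x₁ + δ₁ : ℝ) : EReal) + (l₂ : EReal) * ((x₂ + δ₂ : ℝ) : EReal) :=
        add_le_add
          (mul_le_mul_of_nonneg_left hk₁.le (by exact_mod_cast hl₁))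
          (mul_le_mul_of_nonneg_left hk₂.le (by exact_mod_cast hl₂))
      refine step.trans (le_of_eq ?_)
      rw [← EReal.coe_mul, ← EReal.coe_mul, ← EReal.coe_add, EReal.coe_eq_coe_iff]
      have e1 : l₁ * δ₁ = (c - S) / 2 := by
        rw [hδ₁]; field_simp
      have e2 : l₂ * δ₂ = (c - S) / 2 := by
        rw [hδ₂]; field_simp
      have expand : l₁ * (x₁ + δ₁) + l₂ * (x₂ + δ₂)
          = (l₁ * x₁ + l₂ * x₂) + (l₁ * δ₁ + l₂ * δ₂) := by ring
      rw [expand, e1, e2, ← hSdef]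
      linarith
    exact absurd (hinf_le.trans (hmix.trans hfin)) (not_le.2 hc2)
  refine key.trans (add_le_add
    (mul_le_mul_of_nonneg_left hI₁le (by exact_mod_cast hl₁))
    (mul_le_mul_of_nonneg_left hI₂le (by exact_mod_cast hl₂)))
end

section
/- Generalized Pinsker's inequality: for weakly compact convex sets P, Q of probability measures on a Polish space, max{KL(P‖Q), KL(Q‖P)} ≥ 2·V(P,Q)², where V(P,Q) := max( sup_{μ∈P} inf_{ν∈Q} V(μ,ν), sup_{ν∈Q} inf_{μ∈P} V(μ,ν) ). -/
open MeasureTheory Real ENNReal Filter Topology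
open scoped Classical

/-!
Pinsker's inequality for a single pair of probability measures comes from the pointwise bound
`3 (x - 1)² ≤ (2x + 4) klFun x`, where `klFun x = x log x + 1 - x`; it is proved by a
first-derivative test at `x = 1`. Completing a square turns it into
`s |x - 1| ≤ klFun x / 3 + s² (x + 2) / 2` for every real `s`. Integrating this against `ν` at
`x = dμ/dν` with `s = ‖μ - ν‖ / 3`, where `‖μ - ν‖ = ∫ |dμ/dν - 1| dν`, gives
`‖μ - ν‖² ≤ 2 KL(μ‖ν)`, and `V(μ, ν) ≤ ‖μ - ν‖ / 2`.

Since `t ↦ 2t²` is monotone on `[0, ∞)`, the bound `2 V(μ, ν)² ≤ KL(μ‖ν)` passes through the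
infimum over `ν ∈ Q` and the supremum over `μ ∈ P`; each of the two terms of `V(P, Q)` is thus
controlled by one of `KL(P‖Q)`, `KL(Q‖P)`.
-/

open Set
open InformationTheory (klFun klFun_apply klFun_one hasDerivAt_klFun
  integrable_klFun_rnDeriv_iff integral_klFun_rnDeriv)

lemma monotoneOn_add_one_mul_log_sub :
    MonotoneOn (fun x : ℝ ↦ (x + 1) * log x - 2 * (x - 1)) (Ioi 0) := by
  refine monotoneOn_of_hasDerivWithinAt_nonneg (f' := fun x ↦ log x + x⁻¹ - 1) (convex_Ioi 0)
    (by fun_prop (disch := grind)) (fun x hx ↦ ?_) (fun x hx ↦ ?_) <;>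
    rw [interior_Ioi, mem_Ioi] at hx
  · have h := ((hasDerivAt_id x).add_const 1).mul (hasDerivAt_log hx.ne') |>.sub
      (((hasDerivAt_id x).sub_const 1).const_mul 2)
    refine (h.congr_deriv ?_).hasDerivWithinAt
    simp only [id, add_mul, one_mul, mul_inv_cancel₀ hx.ne']
    ring
  · linarith [one_sub_inv_le_log_of_pos hx]

lemma three_mul_sq_sub_one_le_mul_klFun {x : ℝ} (hx : 0 ≤ x) :
    3 * (x - 1) ^ 2 ≤ (2 * x + 4) * klFun x := by
  set g : ℝ → ℝ := fun x ↦ (x + 1) * log x - 2 * (x - 1)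
  set F : ℝ → ℝ := fun x ↦ (2 * x + 4) * klFun x - 3 * (x - 1) ^ 2
  have hF : ∀ y, 0 < y → HasDerivAt F (4 * g y) y := fun y hy ↦ by
    have h := (((hasDerivAt_id y).const_mul 2).add_const 4).mul (hasDerivAt_klFun hy.ne') |>.sub
      ((((hasDerivAt_id y).sub_const 1).pow 2).const_mul 3)
    refine h.congr_deriv ?_
    simp only [g, klFun_apply, id]
    ring
  have hg1 : g 1 = 0 := by simp [g]
  have hmin : IsMinOn F (Ici 0) 1 := by
    refine isMinOn_Ici_of_deriv (by fun_prop) (by fun_prop)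
      (fun y hy ↦ (hF y hy.1).differentiableAt.differentiableWithinAt)
      (fun y hy ↦ (hF y (one_pos.trans hy)).differentiableAt.differentiableWithinAt)
      (fun y hy ↦ ?_) (fun y hy ↦ ?_)
    · rw [(hF y hy.1).deriv]
      have := monotoneOn_add_one_mul_log_sub hy.1 (mem_Ioi.2 one_pos) hy.2.le
      linarith
    · rw [(hF y (one_pos.trans hy)).deriv]
      have := monotoneOn_add_one_mul_log_sub (mem_Ioi.2 one_pos) (mem_Ioi.2 (one_pos.trans hy))
        hy.le
      linarith
  have := hmin (mem_Ici.2 hx)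
  simp only [F, klFun_one, mem_ofPred_eq] at this
  linarith

lemma mul_abs_sub_one_le_klFun {x : ℝ} (hx : 0 ≤ x) (s : ℝ) :
    s * |x - 1| ≤ klFun x / 3 + s ^ 2 * (x + 2) / 2 := by
  have h := three_mul_sq_sub_one_le_mul_klFun hx
  nlinarith [sq_nonneg (s * (x + 2) - |x - 1|), sq_abs (x - 1)]

section TotalVariation

variable {α : Type*} [MeasurableSpace α]

lemma tvDist_nonneg (μ ν : Measure α) : 0 ≤ tvDist μ ν :=
  Real.iSup_nonneg fun _ ↦ abs_nonneg _

lemma tvDist_comm (μ ν : Measure α) : tvDist μ ν = tvDist ν μ := by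
  simp only [tvDist, abs_sub_comm]

lemma tvDist_le_half_integral_abs_rnDeriv_sub_one {μ ν : Measure α} [IsFiniteMeasure μ]
    [IsFiniteMeasure ν] (hμν : μ ≪ ν) (h_univ : μ univ = ν univ) :
    tvDist μ ν ≤ (∫ x, |(μ.rnDeriv ν x).toReal - 1| ∂ν) / 2 := by
  set f : α → ℝ := fun x ↦ (μ.rnDeriv ν x).toReal - 1
  have hf : Integrable f ν := Measure.integrable_toReal_rnDeriv.sub (integrable_const 1)
  have hset (s : Set α) : (μ s).toReal - (ν s).toReal = ∫ x in s, f x ∂ν := by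
    rw [integral_sub Measure.integrable_toReal_rnDeriv.integrableOn (integrable_const 1),
      Measure.setIntegral_toReal_rnDeriv hμν, setIntegral_const]
    simp [measureReal_def]
  have : Nonempty {s : Set α // MeasurableSet s} := ⟨⟨∅, .empty⟩⟩
  refine ciSup_le fun ⟨s, hs⟩ ↦ ?_
  have hcompl : ∫ x in sᶜ, f x ∂ν = -∫ x in s, f x ∂ν := by
    have h_total : ∫ x, f x ∂ν = 0 := by rw [← setIntegral_univ, ← hset, h_univ, sub_self]
    linarith [integral_add_compl hs hf]
  calc |(μ s).toReal - (ν s).toReal|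
      = (|∫ x in s, f x ∂ν| + |∫ x in sᶜ, f x ∂ν|) / 2 := by
        rw [hset, hcompl, abs_neg]
        ring
    _ ≤ (∫ x in s, |f x| ∂ν + ∫ x in sᶜ, |f x| ∂ν) / 2 := by
        gcongr <;> exact abs_integral_le_integral_abs
    _ = (∫ x, |f x| ∂ν) / 2 := by rw [integral_add_compl hs hf.abs]

lemma two_mul_tvDist_sq_le_integral_llr {μ ν : Measure α} [IsProbabilityMeasure μ]
    [IsProbabilityMeasure ν] (hμν : μ ≪ ν) (h_int : Integrable (llr μ ν) μ) :
    2 * tvDist μ ν ^ 2 ≤ ∫ x, llr μ ν x ∂μ := by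
  set f : α → ℝ := fun x ↦ (μ.rnDeriv ν x).toReal
  set J := ∫ x, |f x - 1| ∂ν
  have hf : Integrable f ν := Measure.integrable_toReal_rnDeriv
  have hf_klFun : Integrable (fun x ↦ klFun (f x)) ν :=
    (integrable_klFun_rnDeriv_iff hμν).2 h_int
  have hKL : ∫ x, klFun (f x) ∂ν = ∫ x, llr μ ν x ∂μ := by
    simp [f, integral_klFun_rnDeriv hμν h_int]
  have h_left : Integrable (fun x ↦ klFun (f x) / 3) ν := hf_klFun.div_const _
  have h_right : Integrable (fun x ↦ (J / 3) ^ 2 * (f x + 2) / 2) ν :=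
    ((hf.add (integrable_const 2)).const_mul _).div_const _
  have hJ : J / 3 * J ≤ (∫ x, llr μ ν x ∂μ) / 3 + (J / 3) ^ 2 * 3 / 2 :=
    calc J / 3 * J = ∫ x, J / 3 * |f x - 1| ∂ν := (integral_const_mul _ _).symm
      _ ≤ ∫ x, (klFun (f x) / 3 + (J / 3) ^ 2 * (f x + 2) / 2) ∂ν :=
        integral_mono ((hf.sub (integrable_const 1)).abs.const_mul _) (h_left.add h_right)
          fun x ↦ mul_abs_sub_one_le_klFun ENNReal.toReal_nonneg _
      _ = (∫ x, llr μ ν x ∂μ) / 3 + (J / 3) ^ 2 * 3 / 2 := by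
        rw [integral_add h_left h_right, integral_div, integral_div, integral_const_mul,
          integral_add hf (integrable_const 2), hKL, Measure.integral_toReal_rnDeriv hμν]
        norm_num
  have htv : tvDist μ ν ≤ J / 2 := tvDist_le_half_integral_abs_rnDeriv_sub_one hμν (by simp)
  calc 2 * tvDist μ ν ^ 2 ≤ 2 * (J / 2) ^ 2 := by gcongr; exact tvDist_nonneg μ ν
    _ ≤ ∫ x, llr μ ν x ∂μ := by linarith

lemma two_mul_tvDist_sq_le_klDiv (μ ν : Measure α) [IsProbabilityMeasure μ]
    [IsProbabilityMeasure ν] : ((2 * tvDist μ ν ^ 2 : ℝ) : EReal) ≤ klDiv μ ν := by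
  unfold klDiv
  split_ifs with h
  · exact EReal.coe_le_coe_iff.2 (two_mul_tvDist_sq_le_integral_llr h.1 h.2)
  · exact le_top

end TotalVariation

lemma coe_two_mul_sq_ciSup_le {ι : Type*} [Nonempty ι] {c : ι → ℝ} (hc : ∀ i, 0 ≤ c i)
    {a : EReal} (h : ∀ i, ((2 * c i ^ 2 : ℝ) : EReal) ≤ a) :
    ((2 * (⨆ i, c i) ^ 2 : ℝ) : EReal) ≤ a := by
  induction a using EReal.rec with
  | bot => exact absurd (h (Classical.arbitrary ι)) (EReal.bot_lt_coe _).not_ge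
  | top => exact le_top
  | coe a =>
    simp only [EReal.coe_le_coe_iff] at h ⊢
    have ha : 0 ≤ a / 2 := by nlinarith [h (Classical.arbitrary ι)]
    have hsup : ⨆ i, c i ≤ √(a / 2) :=
      ciSup_le fun i ↦ Real.le_sqrt_of_sq_le (by linarith [h i])
    have := pow_le_pow_left₀ (Real.iSup_nonneg hc) hsup 2
    rw [Real.sq_sqrt ha] at this
    linarith

lemma coe_two_mul_sq_iSup_iInf_tvDist_le_genKL {X : Type*} [MeasurableSpace X]
    {P : Set (ProbabilityMeasure X)} (Q : Set (ProbabilityMeasure X)) (hP : P.Nonempty) :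
    ((2 * (⨆ μ : P, ⨅ ν : Q, tvDist μ.1.toMeasure ν.1.toMeasure) ^ 2 : ℝ) : EReal)
      ≤ genKL P Q := by
  have : Nonempty P := hP.to_subtype
  unfold genKL
  refine coe_two_mul_sq_ciSup_le (fun μ ↦ Real.iInf_nonneg fun ν ↦ tvDist_nonneg _ _) fun μ ↦ ?_
  refine le_iSup₂_of_le μ.1 μ.2 (le_iInf₂ fun ν hν ↦ ?_)
  have h_inf_le :
      ⨅ ν : Q, tvDist μ.1.toMeasure ν.1.toMeasure ≤ tvDist μ.1.toMeasure ν.toMeasure :=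
    ciInf_le ⟨0, by rintro _ ⟨ν', rfl⟩; exact tvDist_nonneg _ _⟩ (⟨ν, hν⟩ : Q)
  have h_inf_nonneg := Real.iInf_nonneg fun ν : Q ↦ tvDist_nonneg μ.1.toMeasure ν.1.toMeasure
  refine le_trans (EReal.coe_le_coe_iff.2 ?_) (two_mul_tvDist_sq_le_klDiv _ _)
  exact mul_le_mul_of_nonneg_left (pow_le_pow_left₀ h_inf_nonneg h_inf_le 2) two_pos.le

theorem generalized_pinsker_general {X : Type*} [MeasurableSpace X] (P Q : Set (ProbabilityMeasure X))
    (hPne : P.Nonempty) (hQne : Q.Nonempty) :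
    ((2 * (genV P Q)^2 : ℝ) : EReal) ≤ max (genKL P Q) (genKL Q P) := by
  have hPQ := coe_two_mul_sq_iSup_iInf_tvDist_le_genKL Q hPne
  have hQP := coe_two_mul_sq_iSup_iInf_tvDist_le_genKL P hQne
  rw [iSup_congr fun ν ↦ iInf_congr fun μ ↦ tvDist_comm _ _] at hQP
  rcases le_total (⨆ μ : P, ⨅ ν : Q, tvDist μ.1.toMeasure ν.1.toMeasure)
    (⨆ ν : Q, ⨅ μ : P, tvDist μ.1.toMeasure ν.1.toMeasure) with h | h
  · rw [genV, max_eq_right h]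
    exact hQP.trans (le_max_right _ _)
  · rw [genV, max_eq_left h]
    exact hPQ.trans (le_max_left _ _)

theorem generalized_pinsker {X : Type*} [MeasurableSpace X] [TopologicalSpace X]
    [PolishSpace X] [BorelSpace X] (P Q : Set (ProbabilityMeasure X))
    (hPne : P.Nonempty) (hQne : Q.Nonempty) (hPc : IsCompact P) (hQc : IsCompact Q)
    (hPconv : ConvexPM P) (hQconv : ConvexPM Q) :
    ((2 * (genV P Q)^2 : ℝ) : EReal) ≤ max (genKL P Q) (genKL Q P) :=
  generalized_pinsker_general P Q hPne hQne
end
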